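/- Let $a_1 = 0, a_2,\dots,a_n$ be the vertices of a polytope $P$ with interior $P^o$, let $P_1$ be the polytope with vertices $a_2,\dots,a_n$ with relative interior $P_1^o$, and let $U_{n-1}$ denote the entropy function of $P_1$. Then for every $x \in P^o$ and every $\lambda > 1$ with $\lambda x \in P_1^o$, one has $U_{n-1}(\lambda x) - n\ln\lambda + \ln(\lambda - 1) \le U(x)$, with equality when $\lambda = (1 - p_1(x))^{-1}$, where $p_1(x)$ is the first entropy-maximizing weight of $x$ in $P$. -/

import Mathlib

/-!
If positive weights `q` on the vertices `a i`, `i ≠ 0`, represent `λ • x`, then, as `a 0 = 0`,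
the weights `p 0 = 1 - λ⁻¹`, `p i = q i / λ` represent `x`, and
`∑ log p = ∑ log q - (n + 1) log λ + log (λ - 1)`; taking suprema gives the inequality. The
relative-interior hypothesis provides such a `q`, so the supremum defining `U₁ (λ • x)` is not
the junk value `sSup ∅ = 0`. When `λ⁻¹ = 1 - p₀(x)`, the correspondence run backwards sends the
maximizer `p(x)` to weights of `λ • x`, which gives the reverse inequality.
-/

open Finset

/-- The entropy function of a polytope with vertices `a 1, …, a n`:
`U(x) = sup { ∑ᵢ ln pᵢ : pᵢ > 0, ∑ pᵢ = 1, ∑ pᵢ aᵢ = x }`. -/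
noncomputable def entropyU {d n : ℕ} (a : Fin n → EuclideanSpace ℝ (Fin d))
    (x : EuclideanSpace ℝ (Fin d)) : ℝ :=
  sSup {s | ∃ p : Fin n → ℝ, (∀ i, 0 < p i) ∧ ∑ i, p i = 1 ∧
    ∑ i, p i • a i = x ∧ s = ∑ i, Real.log (p i)}

/-- The entropy function of the sub-polytope `P₁` with all vertices except `a 0`:
the supremum of `∑_{i≠0} ln pᵢ` over positive weights on these vertices
representing `y`. -/
noncomputable def entropyU1 {d n : ℕ} (a : Fin (n + 1) → EuclideanSpace ℝ (Fin d))
    (y : EuclideanSpace ℝ (Fin d)) : ℝ :=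
  sSup {s | ∃ p : Fin (n + 1) → ℝ, (∀ i, i ≠ 0 → 0 < p i) ∧
    ∑ i ∈ Finset.univ.erase 0, p i = 1 ∧
    ∑ i ∈ Finset.univ.erase 0, p i • a i = y ∧
    s = ∑ i ∈ Finset.univ.erase 0, Real.log (p i)}

open Filter Topology

theorem exists_one_lt_lineMap_mem_of_mem_intrinsicInterior {E : Type*} [AddCommGroup E]
    [Module ℝ E] [TopologicalSpace E] [IsTopologicalAddGroup E] [ContinuousSMul ℝ E]
    {s : Set E} {y z : E} (hy : y ∈ intrinsicInterior ℝ s) (hz : z ∈ affineSpan ℝ s) :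
    ∃ t : ℝ, 1 < t ∧ AffineMap.lineMap z y t ∈ s := by
  obtain ⟨y', hy', rfl⟩ := mem_intrinsicInterior.1 hy
  let G : ℝ → affineSpan ℝ s := fun t =>
    ⟨AffineMap.lineMap z y' t, AffineMap.lineMap_mem t hz y'.2⟩
  have hG : Continuous G := AffineMap.lineMap_continuous.subtype_mk _
  have hG1 : G 1 = y' := Subtype.ext (AffineMap.lineMap_apply_one z (y' : E))
  have hnear : ∀ᶠ t in 𝓝 1, G t ∈ interior (Subtype.val ⁻¹' s) :=
    hG.continuousAt.preimage_mem_nhds (isOpen_interior.mem_nhds (hG1 ▸ hy'))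
  obtain ⟨t, ht, ht1⟩ := ((hnear.filter_mono nhdsWithin_le_nhds).and
    (self_mem_nhdsWithin : ∀ᶠ t in 𝓝[Set.Ioi 1] (1 : ℝ), t ∈ Set.Ioi 1)).exists
  exact ⟨t, ht1, interior_subset (s := Subtype.val ⁻¹' s) ht⟩

theorem exists_weights_of_mem_convexHull_image {ι R E : Type*} [Field R] [LinearOrder R]
    [IsStrictOrderedRing R] [AddCommGroup E] [Module R E] (s : Finset ι) (v : ι → E) {x : E}
    (hx : x ∈ convexHull R (v '' s)) :
    ∃ w : ι → R, (∀ i ∈ s, 0 ≤ w i) ∧ ∑ i ∈ s, w i = 1 ∧ ∑ i ∈ s, w i • v i = x := by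
  classical
  suffices h : convexHull R (v '' s) ⊆
      {x | ∃ w : ι → R, (∀ i ∈ s, 0 ≤ w i) ∧ ∑ i ∈ s, w i = 1 ∧ ∑ i ∈ s, w i • v i = x} from h hx
  refine convexHull_min ?_ ?_
  · rintro _ ⟨i, hi, rfl⟩
    refine ⟨fun j => if j = i then 1 else 0, fun j _ => by positivity, ?_, ?_⟩ <;>
      simp [mem_coe.1 hi]
  · rintro _ ⟨w₁, hw₁, hw₁1, rfl⟩ _ ⟨w₂, hw₂, hw₂1, rfl⟩ b₁ b₂ hb₁ hb₂ hb
    refine ⟨fun i => b₁ * w₁ i + b₂ * w₂ i, fun i hi => ?_, ?_, ?_⟩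
    · have := hw₁ i hi
      have := hw₂ i hi
      positivity
    · simp only [sum_add_distrib, ← mul_sum, hw₁1, hw₂1, mul_one, hb]
    · simp only [add_smul, mul_smul, sum_add_distrib, ← smul_sum]

theorem exists_pos_weights_of_mem_intrinsicInterior_convexHull {ι E : Type*} [AddCommGroup E]
    [Module ℝ E] [TopologicalSpace E] [IsTopologicalAddGroup E] [ContinuousSMul ℝ E]
    (s : Finset ι) (v : ι → E) {y : E} (hy : y ∈ intrinsicInterior ℝ (convexHull ℝ (v '' s))) :
    ∃ w : ι → ℝ, (∀ i ∈ s, 0 < w i) ∧ ∑ i ∈ s, w i = 1 ∧ ∑ i ∈ s, w i • v i = y := by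
  obtain rfl | hs := s.eq_empty_or_nonempty
  · simp at hy
  have hcard : (0 : ℝ) < #s := by exact_mod_cast hs.card_pos
  set z := s.centerMass (fun _ => (1 : ℝ)) v
  have hz : z ∈ convexHull ℝ (v '' s) := s.centerMass_mem_convexHull (fun _ _ => zero_le_one)
    (by simpa using hcard) (fun i hi => Set.mem_image_of_mem v hi)
  obtain ⟨t, ht, hzt⟩ := exists_one_lt_lineMap_mem_of_mem_intrinsicInterior hy
    (subset_affineSpan ℝ _ hz)
  obtain ⟨w, hw, hw1, hwz⟩ := exists_weights_of_mem_convexHull_image s v hzt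
  -- `y = t⁻¹ • lineMap z y t + (1 - t⁻¹) • z`, and `z` puts positive weight on every point
  refine ⟨fun i => t⁻¹ * w i + (1 - t⁻¹) * (#s : ℝ)⁻¹, fun i hi => ?_, ?_, ?_⟩
  · have := hw i hi
    have : 0 < 1 - t⁻¹ := sub_pos.2 (inv_lt_one_of_one_lt₀ ht)
    positivity
  · rw [sum_add_distrib, ← mul_sum, hw1, sum_const, nsmul_eq_mul]
    field_simp
    ring
  · simp only [add_smul, mul_smul, sum_add_distrib, ← smul_sum, hwz]
    simp only [z, centerMass, one_smul, sum_const, nsmul_eq_mul, mul_one,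
      AffineMap.lineMap_apply_module]
    match_scalars <;> field_simp
    ring

theorem sum_log_nonpos_of_sum_eq_one {ι : Type*} (s : Finset ι) {w : ι → ℝ}
    (hw : ∀ i ∈ s, 0 ≤ w i) (hw1 : ∑ i ∈ s, w i = 1) : ∑ i ∈ s, Real.log (w i) ≤ 0 :=
  sum_nonpos fun i hi => Real.log_nonpos (hw i hi) (hw1 ▸ single_le_sum hw hi)

section Rescaling

variable {n : ℕ} {lam : ℝ} {p q : Fin (n + 1) → ℝ}

theorem sum_eq_one_iff_sum_erase_eq_one (hlam : lam ≠ 0) (hp0 : p 0 = 1 - lam⁻¹)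
    (hq : ∀ i, i ≠ 0 → q i = lam * p i) :
    ∑ i, p i = 1 ↔ ∑ i ∈ univ.erase 0, q i = 1 := by
  rw [← add_sum_erase _ _ (mem_univ 0), hp0,
    sum_congr rfl fun i hi => hq i (ne_of_mem_erase hi), ← mul_sum]
  constructor <;> intro h <;> field_simp at h ⊢ <;> linarith

theorem sum_smul_eq_iff_sum_erase_smul_eq {E : Type*} [AddCommGroup E] [Module ℝ E]
    {a : Fin (n + 1) → E} (ha0 : a 0 = 0) (hlam : lam ≠ 0) (hq : ∀ i, i ≠ 0 → q i = lam * p i)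
    (x : E) : ∑ i, p i • a i = x ↔ ∑ i ∈ univ.erase 0, q i • a i = lam • x := by
  have hqa : ∑ i ∈ univ.erase 0, q i • a i = lam • ∑ i ∈ univ.erase 0, p i • a i := by
    rw [smul_sum]
    exact sum_congr rfl fun i hi => by rw [hq i (ne_of_mem_erase hi), mul_smul]
  rw [hqa, ← add_sum_erase _ _ (mem_univ 0), ha0, smul_zero, zero_add]
  exact (smul_right_injective E hlam).eq_iff.symm

theorem sum_log_eq_sum_erase_log (hlam : 1 < lam) (hp : ∀ i, 0 < p i) (hp0 : p 0 = 1 - lam⁻¹)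
    (hq : ∀ i, i ≠ 0 → q i = lam * p i) :
    ∑ i, Real.log (p i) =
      ∑ i ∈ univ.erase 0, Real.log (q i) - ((n : ℝ) + 1) * Real.log lam + Real.log (lam - 1) := by
  have hlam0 : lam ≠ 0 := by positivity
  have hp0' : Real.log (p 0) = Real.log (lam - 1) - Real.log lam := by
    rw [hp0, show 1 - lam⁻¹ = (lam - 1) / lam by field_simp, Real.log_div (by linarith) hlam0]
  have hlog : ∀ i ∈ univ.erase 0, Real.log (q i) = Real.log lam + Real.log (p i) := fun i hi => by
    rw [hq i (ne_of_mem_erase hi), Real.log_mul hlam0 (hp i).ne']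
  rw [← add_sum_erase _ _ (mem_univ 0), sum_congr rfl hlog, sum_add_distrib, sum_const,
    card_erase_of_mem (mem_univ 0), card_univ, Fintype.card_fin, hp0', nsmul_eq_mul]
  push_cast
  ring

end Rescaling

section Entropy

variable {d n : ℕ}

theorem sum_log_le_entropyU {a : Fin n → EuclideanSpace ℝ (Fin d)} {x : EuclideanSpace ℝ (Fin d)}
    {p : Fin n → ℝ} (hp : ∀ i, 0 < p i) (hp1 : ∑ i, p i = 1) (hpx : ∑ i, p i • a i = x) :
    ∑ i, Real.log (p i) ≤ entropyU a x := by
  refine le_csSup ⟨0, ?_⟩ ⟨p, hp, hp1, hpx, rfl⟩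
  rintro _ ⟨q, hq, hq1, -, rfl⟩
  exact sum_log_nonpos_of_sum_eq_one _ (fun i _ => (hq i).le) hq1

theorem sum_log_le_entropyU1 {a : Fin (n + 1) → EuclideanSpace ℝ (Fin d)}
    {y : EuclideanSpace ℝ (Fin d)} {q : Fin (n + 1) → ℝ} (hq : ∀ i, i ≠ 0 → 0 < q i)
    (hq1 : ∑ i ∈ univ.erase 0, q i = 1) (hqy : ∑ i ∈ univ.erase 0, q i • a i = y) :
    ∑ i ∈ univ.erase 0, Real.log (q i) ≤ entropyU1 a y := by
  refine le_csSup ⟨0, ?_⟩ ⟨q, hq, hq1, hqy, rfl⟩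
  rintro _ ⟨r, hr, hr1, -, rfl⟩
  exact sum_log_nonpos_of_sum_eq_one _ (fun i hi => (hr i (ne_of_mem_erase hi)).le) hr1

theorem entropyU1_le {a : Fin (n + 1) → EuclideanSpace ℝ (Fin d)} {y : EuclideanSpace ℝ (Fin d)}
    (hy : y ∈ intrinsicInterior ℝ (convexHull ℝ (a '' {i | i ≠ 0}))) {c : ℝ}
    (h : ∀ q : Fin (n + 1) → ℝ, (∀ i, i ≠ 0 → 0 < q i) → ∑ i ∈ univ.erase 0, q i = 1 →
      ∑ i ∈ univ.erase 0, q i • a i = y → ∑ i ∈ univ.erase 0, Real.log (q i) ≤ c) :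
    entropyU1 a y ≤ c := by
  have hs : {i | i ≠ 0} = ((univ.erase 0 : Finset (Fin (n + 1))) : Set (Fin (n + 1))) := by
    ext; simp
  rw [hs] at hy
  obtain ⟨q, hq, hq1, hqy⟩ := exists_pos_weights_of_mem_intrinsicInterior_convexHull _ _ hy
  have hq' : ∀ i, i ≠ 0 → 0 < q i := fun i hi => hq i (mem_erase.2 ⟨hi, mem_univ i⟩)
  refine csSup_le ⟨_, q, hq', hq1, hqy, rfl⟩ ?_
  rintro _ ⟨r, hr, hr1, hry, rfl⟩
  exact h r hr hr1 hry

theorem entropyU1_smul_sub_le_entropyU {a : Fin (n + 1) → EuclideanSpace ℝ (Fin d)}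
    (ha0 : a 0 = 0) {lam : ℝ} (hlam : 1 < lam) {x : EuclideanSpace ℝ (Fin d)}
    (hx : lam • x ∈ intrinsicInterior ℝ (convexHull ℝ (a '' {i | i ≠ 0}))) :
    entropyU1 a (lam • x) - ((n : ℝ) + 1) * Real.log lam + Real.log (lam - 1) ≤ entropyU a x := by
  have hlam0 : lam ≠ 0 := by positivity
  suffices entropyU1 a (lam • x) ≤
      entropyU a x + ((n : ℝ) + 1) * Real.log lam - Real.log (lam - 1) by linarith
  refine entropyU1_le hx fun q hq hq1 hqx => ?_
  let p : Fin (n + 1) → ℝ := fun i => if i = 0 then 1 - lam⁻¹ else q i / lam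
  have hp0 : p 0 = 1 - lam⁻¹ := if_pos rfl
  have hqp : ∀ i, i ≠ 0 → q i = lam * p i := fun i hi => by
    simp only [p, if_neg hi]
    field_simp
  have hp : ∀ i, 0 < p i := fun i => by
    by_cases hi : i = 0
    · simpa [hi, p] using inv_lt_one_of_one_lt₀ hlam
    · simpa [hi, p] using div_pos (hq i hi) (by linarith)
  have := sum_log_le_entropyU hp ((sum_eq_one_iff_sum_erase_eq_one hlam0 hp0 hqp).2 hq1)
    ((sum_smul_eq_iff_sum_erase_smul_eq ha0 hlam0 hqp x).2 hqx)
  rw [sum_log_eq_sum_erase_log hlam hp hp0 hqp] at this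
  linarith

theorem sum_log_le_entropyU1_smul_sub {a : Fin (n + 1) → EuclideanSpace ℝ (Fin d)}
    (ha0 : a 0 = 0) {lam : ℝ} (hlam : 1 < lam) {x : EuclideanSpace ℝ (Fin d)}
    {p : Fin (n + 1) → ℝ} (hp : ∀ i, 0 < p i) (hp1 : ∑ i, p i = 1) (hpx : ∑ i, p i • a i = x)
    (hp0 : p 0 = 1 - lam⁻¹) :
    ∑ i, Real.log (p i) ≤
      entropyU1 a (lam • x) - ((n : ℝ) + 1) * Real.log lam + Real.log (lam - 1) := by
  have hlam0 : lam ≠ 0 := by positivity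
  have hqp : ∀ i, i ≠ 0 → lam * p i = lam * p i := fun _ _ => rfl
  have := sum_log_le_entropyU1 (fun i _ => mul_pos (by linarith) (hp i))
    ((sum_eq_one_iff_sum_erase_eq_one hlam0 hp0 hqp).1 hp1)
    ((sum_smul_eq_iff_sum_erase_smul_eq ha0 hlam0 hqp x).1 hpx)
  rw [sum_log_eq_sum_erase_log hlam hp hp0 hqp]
  linarith

end Entropy


theorem stmt_17_general {d n : ℕ}
    (a : Fin (n + 1) → EuclideanSpace ℝ (Fin d))
    (ha0 : a 0 = 0)
    (P : Set (EuclideanSpace ℝ (Fin d)))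
    (P1 : Set (EuclideanSpace ℝ (Fin d)))
    (hP1 : P1 = convexHull ℝ (a '' {i | i ≠ 0}))
    (p : EuclideanSpace ℝ (Fin d) → Fin (n + 1) → ℝ)
    (hp : ∀ x ∈ interior P, (∀ i, 0 < p x i) ∧ ∑ i, p x i = 1 ∧
      ∑ i, p x i • a i = x ∧ ∑ i, Real.log (p x i) = entropyU a x) :
    ∀ x ∈ interior P, ∀ lam : ℝ, 1 < lam → lam • x ∈ intrinsicInterior ℝ P1 →
      (entropyU1 a (lam • x) - ((n : ℝ) + 1) * Real.log lam + Real.log (lam - 1)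
          ≤ entropyU a x) ∧
      (lam = (1 - p x 0)⁻¹ →
        entropyU1 a (lam • x) - ((n : ℝ) + 1) * Real.log lam + Real.log (lam - 1)
          = entropyU a x) := by
  intro x hx lam hlam hlamx
  subst hP1
  obtain ⟨hpos, hp1, hpx, hpU⟩ := hp x hx
  have upper := entropyU1_smul_sub_le_entropyU ha0 hlam hlamx
  refine ⟨upper, fun hlam_eq => le_antisymm upper ?_⟩
  rw [← hpU]
  exact sum_log_le_entropyU1_smul_sub ha0 hlam hpos hp1 hpx (by rw [hlam_eq, inv_inv]; ring)

/-- With `a 0 = 0` and `P₁` the polytope spanned by the remaining vertices: for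
`x ∈ P°` and `λ > 1` with `λ x` in the relative interior of `P₁`,
`U_{n-1}(λx) - n ln λ + ln(λ-1) ≤ U(x)`, with equality for `λ = (1 - p₁(x))⁻¹`. -/
theorem stmt_17 {d n : ℕ} (hn : 2 ≤ n + 1)
    (a : Fin (n + 1) → EuclideanSpace ℝ (Fin d))
    (ha : Function.Injective a) (ha0 : a 0 = 0)
    (P : Set (EuclideanSpace ℝ (Fin d)))
    (hP : P = convexHull ℝ (Set.range a))
    (hvert : ∀ i, a i ∈ Set.extremePoints ℝ P)
    (hint : (interior P).Nonempty)
    (P1 : Set (EuclideanSpace ℝ (Fin d)))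
    (hP1 : P1 = convexHull ℝ (a '' {i | i ≠ 0}))
    (p : EuclideanSpace ℝ (Fin d) → Fin (n + 1) → ℝ)
    (hp : ∀ x ∈ interior P, (∀ i, 0 < p x i) ∧ ∑ i, p x i = 1 ∧
      ∑ i, p x i • a i = x ∧ ∑ i, Real.log (p x i) = entropyU a x) :
    ∀ x ∈ interior P, ∀ lam : ℝ, 1 < lam → lam • x ∈ intrinsicInterior ℝ P1 →
      (entropyU1 a (lam • x) - ((n : ℝ) + 1) * Real.log lam + Real.log (lam - 1)
          ≤ entropyU a x) ∧
      (lam = (1 - p x 0)⁻¹ →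
        entropyU1 a (lam • x) - ((n : ℝ) + 1) * Real.log lam + Real.log (lam - 1)
          = entropyU a x) :=
  stmt_17_general a ha0 P P1 hP1 p hp
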